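/- Let k ≥ 2, let E ⊂ ℕ be finite and nonempty with e₀ = min(E), let f : D → ℕ with E^k ⊆ D ⊂ ℕ^k be regressively regular over E, and let ρ : E^k → ℕ satisfy ρ(x) > min(x) for all x ∈ E^k_2. Set A = Δ[f]E^k_0 (a set of negative integers) and B = Δ[f]E^k_2 (a set of positive integers). Then A ∪ B has a nonempty subset whose elements sum to 0 if and only if there exist A' ⊆ A and B' ⊆ {y ∈ B : y < e₀ · k^k}, not both empty, such that the sum of the elements of A' plus the sum of the elements of B' equals 0. -/

import Mathlib

/-- The minimum coordinate of a tuple `x : Fin k → ℕ`. -/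
noncomputable def minT {k : ℕ} (x : Fin k → ℕ) : ℕ := sInf (Set.range x)

/-- The cube `E^k`, viewed as a set of `k`-tuples of naturals. -/
def cube (k : ℕ) (E : Finset ℕ) : Set (Fin k → ℕ) := {x | ∀ i, x i ∈ E}

/-- Two `k`-tuples of naturals are *order equivalent* if their coordinates compare
(`<` and `=`) in exactly the same positions. -/
def OrdEquiv {k : ℕ} (x y : Fin k → ℕ) : Prop :=
  ∀ i j : Fin k, (x i < x j ↔ y i < y j) ∧ (x i = x j ↔ y i = y j)

/-- `f` is regressively regular over `E`: for each order-type equivalence class of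
`k`-tuples of `E^k`, either `f` is constant on the class with value `< min E`, or
`f x ≥ min x` for every `x` of the class. -/
def RegressivelyRegular {k : ℕ} (f : (Fin k → ℕ) → ℕ) (E : Finset ℕ) : Prop :=
  ∀ x ∈ cube k E,
    (∀ y ∈ cube k E, OrdEquiv x y → f y = f x ∧ f y < sInf (E : Set ℕ)) ∨
    (∀ y ∈ cube k E, OrdEquiv x y → minT y ≤ f y)

/-- The block `E^k_0 = {x ∈ E^k : f(x) < min E}`. -/
noncomputable def Eblock0 (k : ℕ) (f : (Fin k → ℕ) → ℕ) (E : Finset ℕ) : Set (Fin k → ℕ) :=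
  {x ∈ cube k E | f x < sInf (E : Set ℕ)}

/-- The block `E^k_1 = {x ∈ E^k : min E ≤ f(x) < min x}`. -/
noncomputable def Eblock1 (k : ℕ) (f : (Fin k → ℕ) → ℕ) (E : Finset ℕ) : Set (Fin k → ℕ) :=
  {x ∈ cube k E | sInf (E : Set ℕ) ≤ f x ∧ f x < minT x}

/-- The block `E^k_2 = {x ∈ E^k : min x ≤ f(x)}`. -/
noncomputable def Eblock2 (k : ℕ) (f : (Fin k → ℕ) → ℕ) (E : Finset ℕ) : Set (Fin k → ℕ) :=
  {x ∈ cube k E | minT x ≤ f x}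

/-- The set of integers `Δ[f]E^k_0 = {f(x) − min E : x ∈ E^k_0}`. -/
noncomputable def Delta0 (k : ℕ) (f : (Fin k → ℕ) → ℕ) (E : Finset ℕ) : Set ℤ :=
  {z | ∃ x ∈ Eblock0 k f E, z = (f x : ℤ) - ((sInf (E : Set ℕ) : ℕ) : ℤ)}

/-- The set of integers `Δ[f]E^k_2 = {ρ(x) − min(x) : x ∈ E^k_2}`. -/
noncomputable def Delta2 (k : ℕ) (ρ : (Fin k → ℕ) → ℕ) (f : (Fin k → ℕ) → ℕ)
    (E : Finset ℕ) : Set ℤ :=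
  {z | ∃ x ∈ Eblock2 k f E, z = (ρ x : ℤ) - (minT x : ℤ)}

/-!
By regressive regularity, `f` is constant on every order type that meets `E^k_0`, so
`A = Δ[f]E^k_0` has fewer than `k^k` elements, all in `[-e₀, -1]`. In a zero sum the positive
summands add up to minus the negative ones, hence to at most `e₀ (k^k - 1)`, which bounds each
of them.
-/

open Finset

section OrderType

variable {k : ℕ}

def orderRank (x : Fin k → ℕ) (i : Fin k) : ℕ := #{j | x j < x i}

lemma orderRank_lt (x : Fin k → ℕ) (i : Fin k) : orderRank x i < k := by
  simpa [orderRank] using card_lt_card (filter_ssubset.2 ⟨i, mem_univ i, lt_irrefl (x i)⟩)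

lemma orderRank_le_orderRank {x : Fin k → ℕ} {i j : Fin k} (h : x i ≤ x j) :
    orderRank x i ≤ orderRank x j :=
  card_le_card <| monotone_filter_right _ fun _ _ hl => hl.trans_le h

lemma orderRank_lt_orderRank {x : Fin k → ℕ} {i j : Fin k} (h : x i < x j) :
    orderRank x i < orderRank x j :=
  card_lt_card <| (ssubset_iff_of_subset (monotone_filter_right _ fun _ _ hl => hl.trans h)).2
    ⟨i, by simpa using h, by simp⟩

lemma orderRank_lt_orderRank_iff {x : Fin k → ℕ} {i j : Fin k} :
    orderRank x i < orderRank x j ↔ x i < x j :=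
  ⟨fun h => lt_of_not_ge fun h' => (orderRank_le_orderRank h').not_gt h, orderRank_lt_orderRank⟩

lemma orderRank_inj {x : Fin k → ℕ} {i j : Fin k} :
    orderRank x i = orderRank x j ↔ x i = x j := by
  simp only [le_antisymm_iff, ← not_lt, orderRank_lt_orderRank_iff]

lemma exists_orderRank_eq_zero [NeZero k] (x : Fin k → ℕ) : ∃ i, orderRank x i = 0 := by
  obtain ⟨i, hi⟩ := Finite.exists_min x
  exact ⟨i, card_eq_zero.2 <| filter_eq_empty_iff.2 fun j _ => (hi j).not_gt⟩

def orderType (x : Fin k → ℕ) : Fin k → Fin k := fun i => ⟨orderRank x i, orderRank_lt x i⟩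

lemma ordEquiv_of_orderType_eq {x y : Fin k → ℕ} (h : orderType x = orderType y) :
    OrdEquiv x y := by
  have hrank : ∀ i, orderRank x i = orderRank y i := fun i => congrArg Fin.val (congrFun h i)
  intro i j
  rw [← orderRank_lt_orderRank_iff (x := x), ← orderRank_lt_orderRank_iff (x := y),
    ← orderRank_inj (x := x), ← orderRank_inj (x := y), hrank i, hrank j]
  exact ⟨Iff.rfl, Iff.rfl⟩

lemma card_exists_val_eq_zero_lt (hk : 2 ≤ k) :
    #{t : Fin k → Fin k | ∃ i, (t i : ℕ) = 0} < k ^ k := by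
  have hmissing : (fun _ => ⟨1, hk⟩ : Fin k → Fin k) ∉ {t | ∃ i, (t i : ℕ) = 0} := by simp
  simpa using card_lt_card (filter_ssubset.2 ⟨_, mem_univ _, hmissing⟩)

end OrderType

lemma ordEquiv_refl {k : ℕ} (x : Fin k → ℕ) : OrdEquiv x x := fun _ _ => ⟨Iff.rfl, Iff.rfl⟩

lemma sInf_le_minT {k : ℕ} [NeZero k] {E : Finset ℕ} {x : Fin k → ℕ} (hx : x ∈ cube k E) :
    sInf (E : Set ℕ) ≤ minT x :=
  le_csInf (Set.range_nonempty x) fun _ ⟨i, hi⟩ => hi ▸ Nat.sInf_le (hx i)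

lemma RegressivelyRegular.apply_eq_of_ordEquiv {k : ℕ} [NeZero k] {f : (Fin k → ℕ) → ℕ}
    {E : Finset ℕ} (hrr : RegressivelyRegular f E) {x y : Fin k → ℕ}
    (hx : x ∈ Eblock0 k f E) (hy : y ∈ Eblock0 k f E) (hxy : OrdEquiv x y) : f x = f y := by
  rcases hrr x hx.1 with hconst | hlarge
  · exact (hconst y hy.1 hxy).1.symm
  · exact absurd ((sInf_le_minT hx.1).trans (hlarge x hx.1 (ordEquiv_refl x))) hx.2.not_ge

/-- `Δ[f]E^k_0` takes at most one value per order type, and no order type is the constant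
rank `1`, since some coordinate has rank `0`. -/
lemma card_lt_of_subset_Delta0 {k : ℕ} (hk : 2 ≤ k) {f : (Fin k → ℕ) → ℕ} {E : Finset ℕ}
    (hrr : RegressivelyRegular f E) {A' : Finset ℤ} (hA' : ↑A' ⊆ Delta0 k f E) :
    #A' < k ^ k := by
  have : NeZero k := ⟨by omega⟩
  simp only [Set.subset_def, mem_coe, Delta0, Set.mem_ofPred_eq] at hA'
  choose! x hx hxa using hA'
  refine (card_le_card_of_injOn (s := A') (fun a => orderType (x a)) ?_ ?_).trans_lt
    (card_exists_val_eq_zero_lt hk)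
  · intro a _
    simpa [orderType] using exists_orderRank_eq_zero (x a)
  · intro a ha b hb hab
    rw [hxa a ha, hxa b hb,
      hrr.apply_eq_of_ordEquiv (hx a ha) (hx b hb) (ordEquiv_of_orderType_eq hab)]

lemma Delta0_subset_Ico {k : ℕ} {f : (Fin k → ℕ) → ℕ} {E : Finset ℕ} :
    Delta0 k f E ⊆ Set.Ico (-((sInf (E : Set ℕ) : ℕ) : ℤ)) 0 := by
  rintro _ ⟨x, hx, rfl⟩
  have : f x < sInf (E : Set ℕ) := hx.2
  constructor <;> omega

lemma Delta2_subset_Ioi {k : ℕ} {ρ f : (Fin k → ℕ) → ℕ} {E : Finset ℕ}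
    (hρ : ∀ x ∈ Eblock2 k f E, minT x < ρ x) : Delta2 k ρ f E ⊆ Set.Ioi 0 := by
  rintro _ ⟨x, hx, rfl⟩
  have := hρ x hx
  simp only [Set.mem_Ioi]
  omega

/-- A summand of a positive part `B'` balancing a zero sum is at most `-∑ A' ≤ e * #A'`. -/
lemma lt_mul_of_sum_add_sum_eq_zero {A' B' : Finset ℤ} {e N : ℤ} (hA' : ∀ a ∈ A', -e ≤ a)
    (hB' : ∀ b ∈ B', 0 < b) (hN : (#A' : ℤ) < N) (hsum : ∑ a ∈ A', a + ∑ b ∈ B', b = 0)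
    {b : ℤ} (hb : b ∈ B') : b < e * N := by
  have hb_le : b ≤ ∑ b ∈ B', b := single_le_sum (fun c hc => (hB' c hc).le) hb
  have hA'_ge : #A' • (-e) ≤ ∑ a ∈ A', a := card_nsmul_le_sum _ _ _ hA'
  rw [nsmul_eq_mul] at hA'_ge
  nlinarith [hB' b hb, (#A').cast_nonneg (α := ℤ)]

section ZeroSum

variable {A B : Set ℤ} {e N : ℤ}

lemma exists_small_zero_sum_of_exists_zero_sum (hA : ∀ a ∈ A, -e ≤ a ∧ a < 0)
    (hB : ∀ b ∈ B, 0 < b) (hcard : ∀ A' : Finset ℤ, ↑A' ⊆ A → (#A' : ℤ) < N)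
    {C : Finset ℤ} (hC : C.Nonempty) (hCAB : ↑C ⊆ A ∪ B) (hsum : ∑ c ∈ C, c = 0) :
    ∃ A' B' : Finset ℤ, ↑A' ⊆ A ∧ ↑B' ⊆ {y ∈ B | y < e * N} ∧
      (A'.Nonempty ∨ B'.Nonempty) ∧ ∑ a ∈ A', a + ∑ b ∈ B', b = 0 := by
  have hsplit : ∑ a ∈ C with a < 0, a + ∑ b ∈ C with ¬b < 0, b = 0 := by
    rwa [sum_filter_add_sum_filter_not]
  have hneg : ↑(C.filter (· < 0)) ⊆ A := fun c hc => by
    simp only [coe_filter, Set.mem_ofPred_eq] at hc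
    exact (hCAB hc.1).resolve_right fun hcB => (hB c hcB).not_gt hc.2
  have hnonneg : ↑(C.filter (¬ · < 0)) ⊆ B := fun c hc => by
    simp only [coe_filter, Set.mem_ofPred_eq] at hc
    exact (hCAB hc.1).resolve_left fun hcA => hc.2 (hA c hcA).2
  refine ⟨_, _, hneg, fun b hb => ⟨hnonneg hb, ?_⟩, ?_, hsplit⟩
  · exact lt_mul_of_sum_add_sum_eq_zero (fun a ha => (hA a (hneg ha)).1)
      (fun c hc => hB c (hnonneg hc)) (hcard _ hneg) hsplit hb
  · obtain ⟨c, hc⟩ := hC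
    by_cases hc0 : c < 0
    · exact .inl ⟨c, mem_filter.2 ⟨hc, hc0⟩⟩
    · exact .inr ⟨c, mem_filter.2 ⟨hc, hc0⟩⟩

lemma exists_zero_sum_of_exists_small_zero_sum (hA : ∀ a ∈ A, a < 0) (hB : ∀ b ∈ B, 0 < b)
    {A' B' : Finset ℤ} (hA' : ↑A' ⊆ A) (hB' : ↑B' ⊆ B) (hne : A'.Nonempty ∨ B'.Nonempty)
    (hsum : ∑ a ∈ A', a + ∑ b ∈ B', b = 0) :
    ∃ C : Finset ℤ, C.Nonempty ∧ ↑C ⊆ A ∪ B ∧ ∑ c ∈ C, c = 0 := by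
  have hdisj : Disjoint A' B' :=
    disjoint_left.2 fun c hcA hcB => (hA c (hA' hcA)).not_gt (hB c (hB' hcB))
  refine ⟨A' ∪ B', hne.elim (·.mono subset_union_left) (·.mono subset_union_right), ?_, ?_⟩
  · rw [coe_union]
    exact Set.union_subset_union hA' hB'
  · rwa [sum_union hdisj]

theorem exists_zero_sum_iff_exists_small_zero_sum (hA : ∀ a ∈ A, -e ≤ a ∧ a < 0)
    (hB : ∀ b ∈ B, 0 < b) (hcard : ∀ A' : Finset ℤ, ↑A' ⊆ A → (#A' : ℤ) < N) :
    (∃ C : Finset ℤ, C.Nonempty ∧ ↑C ⊆ A ∪ B ∧ ∑ c ∈ C, c = 0) ↔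
    (∃ A' B' : Finset ℤ, ↑A' ⊆ A ∧ ↑B' ⊆ {y ∈ B | y < e * N} ∧
      (A'.Nonempty ∨ B'.Nonempty) ∧ ∑ a ∈ A', a + ∑ b ∈ B', b = 0) := by
  constructor
  · rintro ⟨C, hC, hCAB, hsum⟩
    exact exists_small_zero_sum_of_exists_zero_sum hA hB hcard hC hCAB hsum
  · rintro ⟨A', B', hA', hB', hne, hsum⟩
    exact exists_zero_sum_of_exists_small_zero_sum (fun a ha => (hA a ha).2) hB hA'
      (fun b hb => (hB' hb).1) hne hsum

end ZeroSum

theorem zero_sum_iff_small_general (k : ℕ) (hk : 2 ≤ k) (E : Finset ℕ)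
    (e₀ : ℕ) (he₀ : e₀ = sInf (E : Set ℕ))
    (f : (Fin k → ℕ) → ℕ)
    (hrr : RegressivelyRegular f E)
    (ρ : (Fin k → ℕ) → ℕ) (hρ : ∀ x ∈ Eblock2 k f E, minT x < ρ x) :
    (∃ C : Finset ℤ, C.Nonempty ∧ ↑C ⊆ Delta0 k f E ∪ Delta2 k ρ f E ∧ ∑ c ∈ C, c = 0) ↔
    (∃ A' B' : Finset ℤ, ↑A' ⊆ Delta0 k f E ∧
      ↑B' ⊆ {y ∈ Delta2 k ρ f E | y < (e₀ : ℤ) * (k : ℤ) ^ k} ∧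
      (A'.Nonempty ∨ B'.Nonempty) ∧ (∑ a ∈ A', a) + ∑ b ∈ B', b = 0) := by
  subst he₀
  exact exists_zero_sum_iff_exists_small_zero_sum (fun _ ha => Delta0_subset_Ico ha)
    (fun _ hb => Delta2_subset_Ioi hρ hb)
    (fun _ hA' => by exact_mod_cast card_lt_of_subset_Delta0 hk hrr hA')

/-- with `A = Δ[f]E^k_0` and `B = Δ[f]E^k_2`, `A ∪ B` has a nonempty subset
summing to `0` iff there are `A' ⊆ A` and `B' ⊆ {y ∈ B : y < e₀·k^k}`, not both empty,
with `∑A' + ∑B' = 0`. -/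
theorem zero_sum_iff_small (k : ℕ) (hk : 2 ≤ k) (E : Finset ℕ) (hE : E.Nonempty)
    (e₀ : ℕ) (he₀ : e₀ = sInf (E : Set ℕ))
    (D : Set (Fin k → ℕ)) (f : (Fin k → ℕ) → ℕ) (hED : cube k E ⊆ D)
    (hrr : RegressivelyRegular f E)
    (ρ : (Fin k → ℕ) → ℕ) (hρ : ∀ x ∈ Eblock2 k f E, minT x < ρ x) :
    (∃ C : Finset ℤ, C.Nonempty ∧ ↑C ⊆ Delta0 k f E ∪ Delta2 k ρ f E ∧ ∑ c ∈ C, c = 0) ↔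
    (∃ A' B' : Finset ℤ, ↑A' ⊆ Delta0 k f E ∧
      ↑B' ⊆ {y ∈ Delta2 k ρ f E | y < (e₀ : ℤ) * (k : ℤ) ^ k} ∧
      (A'.Nonempty ∨ B'.Nonempty) ∧ (∑ a ∈ A', a) + ∑ b ∈ B', b = 0) :=
  zero_sum_iff_small_general k hk E e₀ he₀ f hrr ρ hρ
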